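/- Let λ, ν ∈ ℂ with a := ν − λ ∈ ℕ, let N ∈ ℕ and p ∈ ℤ with p ≥ N, and let g_k ∈ Pol_{a−k}[t]_even for k = p−N,…,p+N. Let ψ⁺ := ψ(g) (taking m = p). Then Φ((M_s(ψ⁺))_{s=0}^{2N}) = (M_s(Φ(ψ⁺)))_{s=0}^{2N}; that is, for every s = 0,…,2N, (−1)^s·(M_{2N−s}(ψ⁺))(ζ₁,−ζ₂,ζ₃) = (M_s(Φ(ψ⁺)))(ζ₁,ζ₂,ζ₃). -/
import Mathlib


noncomputable section

/-- `Pol_ℓ[t]_even`: the span of the monomials `t^(ℓ-2b)`; zero subspace for `ℓ < 0`. -/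
def PolEven (l : ℤ) : Submodule ℂ (Polynomial ℂ) :=
  Submodule.span ℂ
    {p : Polynomial ℂ | ∃ b : ℕ, 2 * (b : ℤ) ≤ l ∧ p = Polynomial.X ^ (l - 2 * b).toNat}

/-- The map `T_ℓ`, sending `Σ c_b t^(ℓ-2b)` to `Σ c_b (ζ₁²+ζ₂²)^b ζ₃^(ℓ-2b)`
(zero for `ℓ < 0`). -/
def Tmap (l : ℤ) (g : Polynomial ℂ) : MvPolynomial (Fin 3) ℂ :=
  if l < 0 then 0 else
    ∑ b ∈ Finset.range (l.toNat / 2 + 1),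
      MvPolynomial.C (g.coeff (l.toNat - 2 * b)) *
        (MvPolynomial.X 0 ^ 2 + MvPolynomial.X 1 ^ 2) ^ b *
        MvPolynomial.X 2 ^ (l.toNat - 2 * b)

/-- The operator `M_s` (the F-system equation for `C₁⁺`), acting on a `ℤ`-indexed
tuple of polynomials in `ℂ[ζ₁,ζ₂,ζ₃]`. -/
def Mop (lam : ℂ) (N : ℕ) (φ : ℤ → MvPolynomial (Fin 3) ℂ) (s : ℤ) :
    MvPolynomial (Fin 3) ℂ :=
  MvPolynomial.C (2 * lam) * MvPolynomial.pderiv 0 (φ s)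
    + 2 * (MvPolynomial.X 0 * MvPolynomial.pderiv 0 (MvPolynomial.pderiv 0 (φ s))
        + MvPolynomial.X 1 * MvPolynomial.pderiv 1 (MvPolynomial.pderiv 0 (φ s))
        + MvPolynomial.X 2 * MvPolynomial.pderiv 2 (MvPolynomial.pderiv 0 (φ s)))
    - MvPolynomial.X 0 * (MvPolynomial.pderiv 0 (MvPolynomial.pderiv 0 (φ s))
        + MvPolynomial.pderiv 1 (MvPolynomial.pderiv 1 (φ s))
        + MvPolynomial.pderiv 2 (MvPolynomial.pderiv 2 (φ s)))
    - MvPolynomial.C ((s : ℂ)) * MvPolynomial.pderiv 2 (φ (s - 1))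
    + MvPolynomial.C (2 * Complex.I * ((s : ℂ) - (N : ℂ))) * MvPolynomial.pderiv 1 (φ s)
    + MvPolynomial.C (2 * (N : ℂ) - (s : ℂ)) * MvPolynomial.pderiv 2 (φ (s + 1))

/-- The tuple `ψ(g)` with components `ψ_{k-m+N} = (T_{a-k} g_k)·(ζ₁+iζ₂)^k`,
`k = m-N,…,m+N` (zero outside `0,…,2N`). -/
def psiTuple (a : ℤ) (N : ℕ) (m : ℤ) (g : ℤ → Polynomial ℂ) :
    ℤ → MvPolynomial (Fin 3) ℂ := fun s =>
  if 0 ≤ s ∧ s ≤ 2 * (N : ℤ) then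
    Tmap (a - (s + m - N)) (g (s + m - N)) *
      (MvPolynomial.X 0 + MvPolynomial.C Complex.I * MvPolynomial.X 1) ^ (s + m - N).toNat
  else 0

/-- Substitution `ζ₂ ↦ -ζ₂`. -/
def negSub (p : MvPolynomial (Fin 3) ℂ) : MvPolynomial (Fin 3) ℂ :=
  MvPolynomial.aeval ![MvPolynomial.X 0, -MvPolynomial.X 1, MvPolynomial.X 2] p


open MvPolynomial in
lemma negSub_zero : negSub 0 = 0 := by simp [negSub]
open MvPolynomial in
lemma negSub_C (c : ℂ) : negSub (C c) = C c := by simp [negSub]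
lemma negSub_add (p q : MvPolynomial (Fin 3) ℂ) : negSub (p + q) = negSub p + negSub q :=
  map_add _ _ _
lemma negSub_sub (p q : MvPolynomial (Fin 3) ℂ) : negSub (p - q) = negSub p - negSub q :=
  map_sub _ _ _
lemma negSub_mul (p q : MvPolynomial (Fin 3) ℂ) : negSub (p * q) = negSub p * negSub q :=
  map_mul _ _ _
lemma negSub_two : negSub 2 = 2 :=
  map_ofNat (MvPolynomial.aeval ![MvPolynomial.X 0, -MvPolynomial.X 1, MvPolynomial.X 2]) 2
open MvPolynomial in
lemma negSub_X (n : Fin 3) : negSub (X n) = ![X 0, -X 1, X 2] n := by simp [negSub]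
open MvPolynomial in
lemma negSub_X0 : negSub (X 0) = X 0 := by simp [negSub]
open MvPolynomial in
lemma negSub_X1 : negSub (X 1) = -X 1 := by simp [negSub]
open MvPolynomial in
lemma negSub_X2 : negSub (X 2) = X 2 := by simp [negSub]

open MvPolynomial in
lemma pderiv_negSub (i : Fin 3) (p : MvPolynomial (Fin 3) ℂ) :
    pderiv i (negSub p) = ![(1 : MvPolynomial (Fin 3) ℂ), -1, 1] i * negSub (pderiv i p) := by
  induction p using MvPolynomial.induction_on with
  | C a => rw [negSub_C, pderiv_C, negSub_zero, mul_zero]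
  | add p q hp hq => simp only [negSub_add, map_add, hp, hq]; ring
  | mul_X p n ih =>
      have hXn : pderiv i (![X 0, -X 1, X 2] n) =
          ![(1 : MvPolynomial (Fin 3) ℂ), -1, 1] i * negSub (pderiv i (X n)) := by
        fin_cases i <;> fin_cases n <;>
          simp [negSub, pderiv_X, Pi.single_apply]
      rw [negSub_mul, negSub_X, pderiv_mul, ih, hXn, pderiv_mul, negSub_add, negSub_mul,
        negSub_mul, negSub_X]
      ring

open MvPolynomial in
lemma pderiv_negSub0 (p : MvPolynomial (Fin 3) ℂ) :
    pderiv 0 (negSub p) = negSub (pderiv 0 p) := by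
  simpa using pderiv_negSub 0 p
open MvPolynomial in
lemma pderiv_negSub1 (p : MvPolynomial (Fin 3) ℂ) :
    pderiv 1 (negSub p) = - negSub (pderiv 1 p) := by
  simpa using pderiv_negSub 1 p
open MvPolynomial in
lemma pderiv_negSub2 (p : MvPolynomial (Fin 3) ℂ) :
    pderiv 2 (negSub p) = negSub (pderiv 2 p) := by
  simpa using pderiv_negSub 2 p

open MvPolynomial in
lemma key_statement12 (lam : ℂ) (N : ℕ) (φ : ℤ → MvPolynomial (Fin 3) ℂ) (s : ℤ) :
    ((-1 : ℂ) ^ s) • negSub (Mop lam N φ (2 * (N : ℤ) - s)) =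
      Mop lam N (fun s' : ℤ => ((-1 : ℂ) ^ s') • negSub (φ (2 * (N : ℤ) - s'))) s := by
  have hne : (-1 : ℂ) ≠ 0 := by norm_num
  have e1 : ((-1 : ℂ) ^ (s - 1)) = -(-1 : ℂ) ^ s := by
    rw [zpow_sub₀ hne, zpow_one, div_neg, div_one]
  have e2 : ((-1 : ℂ) ^ (s + 1)) = -(-1 : ℂ) ^ s := by
    rw [zpow_add₀ hne]; simp
  have i1 : 2 * (N : ℤ) - (s - 1) = (2 * (N : ℤ) - s) + 1 := by ring
  have i2 : 2 * (N : ℤ) - (s + 1) = (2 * (N : ℤ) - s) - 1 := by ring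
  simp only [Mop, e1, e2, i1, i2]
  push_cast
  simp only [negSub_sub, negSub_add, negSub_mul, negSub_C, negSub_two, negSub_X0, negSub_X1,
    negSub_X2, map_smul, neg_smul, map_neg, pderiv_negSub0, pderiv_negSub1, pderiv_negSub2,
    smul_eq_C_mul, C_mul, map_sub, map_ofNat, neg_neg, pderiv_C_mul]
  ring

/-- `Φ` intertwines the F-system operators,
`(-1)^s·(M_{2N-s}(ψ⁺))(ζ₁,-ζ₂,ζ₃) = M_s(Φ(ψ⁺))` for `s = 0,…,2N`. -/
theorem statement12 (lam nu : ℂ) (a N : ℕ) (p : ℤ) (ha : nu - lam = (a : ℂ))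
    (hp : (N : ℤ) ≤ p) (g : ℤ → Polynomial ℂ)
    (hg : ∀ k : ℤ, p - N ≤ k → k ≤ p + N → g k ∈ PolEven ((a : ℤ) - k)) :
    ∀ s : ℤ, 0 ≤ s → s ≤ 2 * (N : ℤ) →
      ((-1 : ℂ) ^ s) •
          negSub (Mop lam N (psiTuple (a : ℤ) N p g) (2 * (N : ℤ) - s)) =
        Mop lam N
          (fun s' : ℤ =>
            ((-1 : ℂ) ^ s') • negSub (psiTuple (a : ℤ) N p g (2 * (N : ℤ) - s'))) s := by
  intro s _ _
  exact key_statement12 lam N (psiTuple (a : ℤ) N p g) s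

end
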